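/- arXiv:1702.05321 — 2 statements merged into one kernel-verified Lean document; each statement's English description precedes it below -/
import Mathlib

section
/- Under the hypotheses of the previous statement (G_Per locally Lipschitz with u*(x)u(x) > -|u(x)| a.e. on {u ≠ 0} for all u* ∈ ∂G_Per(u)), Clarke's generalized directional derivative satisfies (G₁ + G_Per)⁰(u; -u) < 0 for every u ∈ L^p(Ω) \ {0}. -/
open MeasureTheory

/-- **Lemma 5.1 (second part)**: under condition (G5) (`g(x) > -1` on `{u > 0}`,
`g(x) < 1` on `{u < 0}` for all `g ∈ ∂G_Per(u)`, equivalently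
`g(x)u(x) > -|u(x)|` a.e. on `{u ≠ 0}`), Clarke's generalized directional
derivative satisfies `(G₁ + G_Per)⁰(u; -u) < 0` for `u ≠ 0`.  Here `D` denotes
this derivative; by Clarke's max formula and the sum rule it is attained as
`D = ∫ (s + g)(-u)` for some `s ∈ ∂G₁(u)` (so `s(x) ∈ Sgn(u(x))` a.e.) and
some `g ∈ ∂G_Per(u)`, which is encoded in `hD`. -/
theorem stmt10 {α : Type*} [MeasurableSpace α] (μ : Measure α)
    (grad : Set (α → ℝ))
    (u : α → ℝ)
    (hu1 : Integrable u μ)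
    (hu0 : ¬ (u =ᵐ[μ] 0))
    (hG5 : ∀ g ∈ grad, ∀ᵐ x ∂μ, (0 < u x → -1 < g x) ∧ (u x < 0 → g x < 1))
    (hintg : ∀ g ∈ grad, Integrable (fun x => g x * u x) μ)
    (D : ℝ)
    (hD : ∃ s g : α → ℝ,
      (∀ᵐ x ∂μ, s x ∈ Set.Icc (-1 : ℝ) 1 ∧ (0 < u x → s x = 1) ∧ (u x < 0 → s x = -1)) ∧
      Integrable (fun x => s x * u x) μ ∧
      g ∈ grad ∧
      D = ∫ x, (s x + g x) * (-(u x)) ∂μ) :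
    D < 0 := by
  obtain ⟨s, g, hs, hsint, hg, hDeq⟩ := hD
  set f : α → ℝ := fun x => (s x + g x) * u x with hf
  have hfint : Integrable f μ := by
    have : f = fun x => s x * u x + g x * u x := by
      funext x; simp [hf]; ring
    rw [this]
    exact hsint.add (hintg g hg)
  -- pointwise: a.e., 0 ≤ f x and (u x ≠ 0 → 0 < f x)
  have hpt : ∀ᵐ x ∂μ, 0 ≤ f x ∧ (u x ≠ 0 → 0 < f x) := by
    filter_upwards [hs, hG5 g hg] with x ⟨_, hs1, hsm1⟩ ⟨hg1, hg2⟩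
    rcases lt_trichotomy (u x) 0 with h | h | h
    · have hfx : 0 < f x := by
        have : s x + g x < 0 := by rw [hsm1 h]; linarith [hg2 h]
        simpa [hf] using mul_pos_of_neg_of_neg this h
      exact ⟨hfx.le, fun _ => hfx⟩
    · refine ⟨by simp [hf, h], fun hne => absurd h hne⟩
    · have hfx : 0 < f x := by
        have : 0 < s x + g x := by rw [hs1 h]; linarith [hg1 h]
        exact mul_pos this h
      exact ⟨hfx.le, fun _ => hfx⟩
  have hnonneg : 0 ≤ᵐ[μ] f := hpt.mono fun x hx => hx.1
  have hsupp : 0 < μ (Function.support f) := by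
    have hne : μ {x | u x ≠ 0} ≠ 0 := by
      intro h
      exact hu0 (by simpa [Filter.EventuallyEq, ae_iff] using h)
    have hsub : ∀ᵐ x ∂μ, x ∈ {x | u x ≠ 0} → x ∈ Function.support f := by
      filter_upwards [hpt] with x hx hxu
      exact (hx.2 hxu).ne'
    have := measure_mono_ae hsub
    exact lt_of_lt_of_le (pos_iff_ne_zero.mpr hne) this
  have hIpos : 0 < ∫ x, f x ∂μ :=
    (integral_pos_iff_support_of_nonneg_ae hnonneg hfint).mpr hsupp
  have : D = -∫ x, f x ∂μ := by
    rw [hDeq, ← integral_neg]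
    congr 1; funext x; simp [hf]
  rw [this]
  linarith
end

section
/- Let K be a compact metric space and let (S_j) be a sequence of nonempty compact symmetric subsets of a Banach space X, all contained in a fixed compact set, converging in the Hausdorff metric to a compact set S. If additionally 0 ∉ S, then S is symmetric and genus(S) ≥ limsup_j genus(S_j). -/
open Filter Topology

/-- The Krasnoselskii genus of a (symmetric) subset `S` of a topological vector
space: the least `k` such that there is a continuous map `φ : S → ℝᵏ \ {0}`
which is odd on `S`; `⊤` if no such `k` exists. -/
noncomputable def genusInd {X : Type*} [TopologicalSpace X] [Neg X] (S : Set X) : ℕ∞ :=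
  sInf {m : ℕ∞ | ∃ k : ℕ, m = (k : ℕ∞) ∧ ∃ φ : X → (Fin k → ℝ),
    ContinuousOn φ S ∧ (∀ x ∈ S, φ x ≠ 0) ∧ ∀ x ∈ S, φ (-x) = -φ x}

/-- **Upper semicontinuity of the genus along Hausdorff limits** (used with
Blaschke's compactness theorem): if nonempty compact symmetric sets `S_j`,
contained in a fixed compact set `K`, converge in the Hausdorff distance to a
nonempty compact set `S` with `0 ∉ S`, then `S` is symmetric and
`genus S ≥ limsup_j genus S_j`. -/
theorem stmt19 {X : Type*} [NormedAddCommGroup X] [NormedSpace ℝ X]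
    (K : Set X) (hK : IsCompact K)
    (Sj : ℕ → Set X) (S : Set X)
    (hSne : ∀ j, (Sj j).Nonempty)
    (hSc : ∀ j, IsCompact (Sj j))
    (hSK : ∀ j, Sj j ⊆ K)
    (hSsym : ∀ j, ∀ x ∈ Sj j, -x ∈ Sj j)
    (hS : IsCompact S) (hSn : S.Nonempty)
    (hconv : Tendsto (fun j => Metric.hausdorffDist (Sj j) S) atTop (nhds 0))
    (h0 : (0 : X) ∉ S) :
    (∀ x ∈ S, -x ∈ S) ∧
    Filter.limsup (fun j => genusInd (Sj j)) atTop ≤ genusInd S := by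
  have hfin : ∀ j, EMetric.hausdorffEdist (Sj j) S ≠ ⊤ := fun j =>
    Metric.hausdorffEdist_ne_top_of_nonempty_of_bounded (hSne j) hSn
      (hSc j).isBounded hS.isBounded
  -- Symmetry of the limit set
  have hsym : ∀ x ∈ S, -x ∈ S := by
    intro x hx
    rw [← hS.isClosed.closure_eq, Metric.mem_closure_iff_infDist_zero hSn]
    refine le_antisymm ?_ Metric.infDist_nonneg
    have hb : ∀ j, Metric.infDist (-x) S ≤ 2 * Metric.hausdorffDist (Sj j) S := by
      intro j
      obtain ⟨y, hy, hyd⟩ := (hSc j).exists_infDist_eq_dist (hSne j) x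
      have h1 : dist x y ≤ Metric.hausdorffDist (Sj j) S := by
        rw [← hyd, Metric.hausdorffDist_comm]
        exact Metric.infDist_le_hausdorffDist_of_mem hx
          (by rw [EMetric.hausdorffEdist_comm]; exact hfin j)
      have h2 : Metric.infDist (-y) S ≤ Metric.hausdorffDist (Sj j) S :=
        Metric.infDist_le_hausdorffDist_of_mem (hSsym j y hy) (hfin j)
      calc Metric.infDist (-x) S ≤ Metric.infDist (-y) S + dist (-x) (-y) :=
            Metric.infDist_le_infDist_add_dist
        _ ≤ Metric.hausdorffDist (Sj j) S + dist x y := by rw [dist_neg_neg]; gcongr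
        _ ≤ 2 * Metric.hausdorffDist (Sj j) S := by linarith
    have hlim : Tendsto (fun j => 2 * Metric.hausdorffDist (Sj j) S) atTop (nhds 0) := by
      simpa using hconv.const_mul 2
    exact ge_of_tendsto' hlim hb
  refine ⟨hsym, ?_⟩
  refine le_sInf ?_
  rintro m ⟨k, rfl, φ, hφc, hφ0, hφodd⟩
  -- Tietze extension of φ
  obtain ⟨g, hg⟩ := ContinuousMap.exists_restrict_eq (Y := Fin k → ℝ)
    hS.isClosed ⟨S.restrict φ, hφc.restrict⟩
  have hgS : ∀ x ∈ S, g x = φ x := fun x hx => DFunLike.congr_fun hg ⟨x, hx⟩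
  set ψ : X → (Fin k → ℝ) := fun x => (2⁻¹ : ℝ) • (g x - g (-x)) with hψdef
  have hψcont : Continuous ψ := by
    exact ((map_continuous g).sub ((map_continuous g).comp continuous_neg)).const_smul (2⁻¹ : ℝ)
  have hψodd : ∀ x : X, ψ (-x) = -ψ x := by
    intro x
    simp only [hψdef, neg_neg]
    rw [← smul_neg, neg_sub]
  have hψS : ∀ x ∈ S, ψ x = φ x := by
    intro x hx
    simp only [hψdef, hgS x hx, hgS (-x) (hsym x hx), hφodd x hx, sub_neg_eq_add,
      ← two_smul ℝ, smul_smul]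
    norm_num
  -- open neighborhood where ψ ≠ 0
  set U : Set X := {x | ψ x ≠ 0} with hUdef
  have hU : IsOpen U := isOpen_compl_iff.mpr (isClosed_singleton.preimage hψcont)
  have hSU : S ⊆ U := by
    intro x hx
    simp only [hUdef, Set.mem_setOf_eq, hψS x hx]
    exact hφ0 x hx
  obtain ⟨ε, hε, hthick⟩ := hS.exists_thickening_subset_open hU hSU
  have hev : ∀ᶠ j in atTop, genusInd (Sj j) ≤ (k : ℕ∞) := by
    filter_upwards [hconv.eventually_lt_const hε] with j hj
    have hsub : Sj j ⊆ U := by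
      intro x hxj
      refine hthick ?_
      rw [Metric.mem_thickening_iff_infDist_lt hSn]
      exact lt_of_le_of_lt (Metric.infDist_le_hausdorffDist_of_mem hxj (hfin j)) hj
    exact sInf_le ⟨k, rfl, ψ, hψcont.continuousOn,
      fun x hx => hsub hx, fun x _ => hψodd x⟩
  exact limsup_le_of_le (by isBoundedDefault) hev
end
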